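/- In the two-route Pigou network with total demand 1, route a with constant travel time 1 and route b with travel time x^β (where x is the flow on route b), the two-day rotation scheme with participation rate p ∈ (0,1] and rotation fraction 1/2 yields a Pareto improvement over pure user equilibrium for every congestion exponent β ≥ 1: the participants' two-day average travel time (1 + (1 - p/2)^β)/2 is strictly less than 1, and the non-participants' travel time (1 - p/2)^β is strictly less than 1, where 1 is the travel time every user experiences under pure user equilibrium. -/
import Mathlib

/-- **Pareto improvement of the two-day rotation scheme in Pigou's network.**
Route a has constant travel time 1; route b has travel time `x ^ β` for flow `x`.
Under the rotation scheme with participation rate `p ∈ (0,1]` and rotation fraction 1/2,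
the flow on route b on each day is `1 - p/2`.  For every `β ≥ 1`, participants' two-day
average travel time `(1 + (1 - p/2)^β)/2` and non-participants' travel time `(1 - p/2)^β`
are both strictly less than 1, the travel time every user experiences under pure user
equilibrium. -/
theorem rotation_pareto_improvement (p β : ℝ) (hp0 : 0 < p) (hp1 : p ≤ 1) (hβ : 1 ≤ β) :
    (1 + (1 - p / 2) ^ β) / 2 < 1 ∧ (1 - p / 2) ^ β < 1 := by
  have h : (1 - p / 2) ^ β < 1 :=
    Real.rpow_lt_one (by linarith) (by linarith) (by linarith)
  exact ⟨by linarith, h⟩
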